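/- arXiv:2602.13149 — 3 statements merged into one kernel-verified Lean document; each statement's English description precedes it below -/
import Mathlib

section
/- A sequence (v_1, v_2, ..., v_k) of vertices of a graph G is a burning sequence if and only if for each pair i, j ∈ {1,...,k} with i ≠ j, d(v_i, v_j) ≥ |i − j|, and the union over l = 1 to k of the closed balls N_{k−l}[v_l] equals V(G). -/
/-- Zero forcing closure: vertices eventually colored blue. -/
inductive SimpleGraph.Forced {V : Type*} (G : SimpleGraph V) (B : Set V) : V → Prop
  | init (v : V) (hv : v ∈ B) : SimpleGraph.Forced G B v
  | force (v w : V) (hv : SimpleGraph.Forced G B v) (hadj : G.Adj v w)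
      (hall : ∀ u, G.Adj v u → u ≠ w → SimpleGraph.Forced G B u) : SimpleGraph.Forced G B w

def SimpleGraph.IsZeroForcingSet {V : Type*} (G : SimpleGraph V) (B : Set V) : Prop :=
  ∀ v, G.Forced B v

noncomputable def SimpleGraph.zeroForcingNumber {V : Type*} (G : SimpleGraph V) : ℕ :=
  sInf {n | ∃ B : Set V, B.ncard = n ∧ G.IsZeroForcingSet B}

/-- closed ball of radius r -/
def SimpleGraph.closedBall {V : Type*} (G : SimpleGraph V) (v : V) (r : ℕ) : Set V :=
  {w | G.edist v w ≤ (r : ℕ∞)}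

/-- Burning sequence (alternative characterization). -/
def SimpleGraph.IsBurningSeq {V : Type*} (G : SimpleGraph V) {k : ℕ} (s : Fin k → V) : Prop :=
  (∀ i j : Fin k, i ≠ j →
      ((((i : ℕ) : ℤ) - ((j : ℕ) : ℤ)).natAbs : ℕ∞) ≤ G.edist (s i) (s j)) ∧
  (⋃ l : Fin k, G.closedBall (s l) (k - 1 - (l : ℕ))) = Set.univ

noncomputable def SimpleGraph.burningNumber {V : Type*} (G : SimpleGraph V) : ℕ :=
  sInf {k | ∃ s : Fin k → V, G.IsBurningSeq s}

/-- Strong product of graphs. -/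
def SimpleGraph.strongProd {α β : Type*} (G : SimpleGraph α) (H : SimpleGraph β) :
    SimpleGraph (α × β) where
  Adj x y := (x.1 = y.1 ∧ H.Adj x.2 y.2) ∨ (x.2 = y.2 ∧ G.Adj x.1 y.1) ∨
    (G.Adj x.1 y.1 ∧ H.Adj x.2 y.2)
  symm := by
    constructor
    rintro ⟨a, b⟩ ⟨c, d⟩ (⟨h1, h2⟩ | ⟨h1, h2⟩ | ⟨h1, h2⟩)
    · exact Or.inl ⟨h1.symm, h2.symm⟩
    · exact Or.inr (Or.inl ⟨h1.symm, h2.symm⟩)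
    · exact Or.inr (Or.inr ⟨h1.symm, h2.symm⟩)
  loopless := by
    constructor
    rintro ⟨a, b⟩ (⟨_, h2⟩ | ⟨_, h2⟩ | ⟨h1, _⟩)
    exacts [H.irrefl h2, G.irrefl h2, G.irrefl h1]

instance {α β : Type*} (G : SimpleGraph α) (H : SimpleGraph β)
    [DecidableEq α] [DecidableEq β] [DecidableRel G.Adj] [DecidableRel H.Adj] :
    DecidableRel (G.strongProd H).Adj :=
  fun _ _ => inferInstanceAs (Decidable (_ ∨ _ ∨ _))

section Hypergraph
variable {V : Type*} [DecidableEq V]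

/-- Lazy burning closure on a hypergraph given by its edge set. -/
inductive LazyBurned (E : Finset (Finset V)) (B : Set V) : V → Prop
  | init (v : V) (hv : v ∈ B) : LazyBurned E B v
  | spread (v : V) (h : Finset V) (hE : h ∈ E) (hcard : 2 ≤ h.card) (hv : v ∈ h)
      (hall : ∀ u ∈ h, u ≠ v → LazyBurned E B u) : LazyBurned E B v

def IsLazyBurningSet (E : Finset (Finset V)) (B : Set V) : Prop := ∀ v, LazyBurned E B v

noncomputable def lazyBurningNumber (E : Finset (Finset V)) : ℕ :=
  sInf {n | ∃ B : Set V, B.ncard = n ∧ IsLazyBurningSet E B}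

/-- one round of propagation in hypergraph burning -/
def hSpread (E : Finset (Finset V)) (S : Set V) : Set V :=
  S ∪ {v | ∃ h ∈ E, 2 ≤ h.card ∧ v ∈ h ∧ ∀ u ∈ h, u ≠ v → u ∈ S}

/-- burned vertices after t rounds of the (round-based) hypergraph burning process -/
def hBurnedAt (E : Finset (Finset V)) {k : ℕ} (s : Fin k → V) : ℕ → Set V
  | 0 => ∅
  | t + 1 => hSpread E (hBurnedAt E s t) ∪ {v | ∃ ht : t < k, v = s ⟨t, ht⟩}

noncomputable def hBurningNumber (E : Finset (Finset V)) : ℕ :=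
  sInf {k | ∃ s : Fin k → V,
    (∀ t : Fin k, s t ∉ hBurnedAt E s (t : ℕ)) ∧ hBurnedAt E s k = Set.univ}

/-- incidence graph of a hypergraph -/
def IG (E : Finset (Finset V)) : SimpleGraph (V ⊕ {h // h ∈ E}) where
  Adj x y := (∃ v h, x = Sum.inl v ∧ y = Sum.inr h ∧ v ∈ (h : Finset V)) ∨
    (∃ v h, x = Sum.inr h ∧ y = Sum.inl v ∧ v ∈ (h : Finset V))
  symm := by
    constructor
    rintro x y (⟨v, h, rfl, rfl, hm⟩ | ⟨v, h, rfl, rfl, hm⟩)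
    · exact Or.inr ⟨v, h, rfl, rfl, hm⟩
    · exact Or.inl ⟨v, h, rfl, rfl, hm⟩
  loopless := by
    constructor
    rintro x (⟨v, h, rfl, he, hm⟩ | ⟨v, h, rfl, he, hm⟩) <;> simp at he

/-- connectivity relation of a hypergraph -/
def hconn (E : Finset (Finset V)) : V → V → Prop :=
  Relation.ReflTransGen (fun u v => ∃ h ∈ E, u ∈ h ∧ v ∈ h)

end Hypergraph

/-- burned vertices after `t` rounds of the graph burning process with sources `s` -/
def burnedAt {V : Type*} (G : SimpleGraph V) {k : ℕ} (s : Fin k → V) : ℕ → Set V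
  | 0 => ∅
  | t + 1 => burnedAt G s t ∪ {v | ∃ ht : t < k, v = s ⟨t, ht⟩} ∪
      {w | ∃ v ∈ burnedAt G s t, G.Adj v w}

/-
A vertex `v` is burned after `t` rounds exactly when some source `s l` with `l < t` lies within
distance `t - 1 - l` of `v`: fire started in round `l + 1` spreads one edge per round, and every
vertex on a shortest path from `s l` is burned in time. At `t = k` this says that the process
burns everything iff the balls `N_{k-1-l}[s l]` cover `V`; at `t = i` applied to `s i` it says
that `s i` is still unburned when chosen iff `d(s j, s i) ≥ i - j` for all `j < i`.
-/

namespace SimpleGraph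

variable {V : Type*} {G : SimpleGraph V}

lemma exists_adj_edist_le_of_edist_le_succ {u w : V} {n : ℕ}
    (h : G.edist u w ≤ (n + 1 : ℕ)) (hne : u ≠ w) : ∃ v, G.Adj v w ∧ G.edist u v ≤ n := by
  obtain ⟨p, hp⟩ := exists_walk_of_edist_ne_top (ne_top_of_le_ne_top (ENat.natCast_ne_top _) h)
  have hnil : ¬p.Nil := Walk.not_nil_of_ne hne
  refine ⟨p.penultimate, p.adj_penultimate hnil, ?_⟩
  have hlen : p.length ≤ n + 1 := by exact_mod_cast hp ▸ h
  calc G.edist u p.penultimate ≤ p.dropLast.length := edist_le _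
    _ ≤ n := by rw [Walk.length_dropLast]; exact_mod_cast (by omega)

lemma mem_burnedAt_iff {k : ℕ} (s : Fin k → V) (t : ℕ) (v : V) :
    v ∈ burnedAt G s t ↔ ∃ l : Fin k, (l : ℕ) < t ∧ v ∈ G.closedBall (s l) (t - 1 - l) := by
  induction t generalizing v with
  | zero => simp [burnedAt]
  | succ t ih =>
    simp only [closedBall, Set.mem_ofPred_eq] at ih ⊢
    constructor
    · rintro ((hv | ⟨ht, rfl⟩) | ⟨u, hu, huv⟩)
      · obtain ⟨l, hl, hd⟩ := (ih v).mp hv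
        exact ⟨l, by omega, hd.trans (by gcongr; omega)⟩
      · exact ⟨⟨t, ht⟩, by simp, by simp [edist_self]⟩
      · obtain ⟨l, hl, hd⟩ := (ih u).mp hu
        refine ⟨l, by omega, ?_⟩
        calc G.edist (s l) v ≤ G.edist (s l) u + G.edist u v := G.edist_triangle
          _ = G.edist (s l) u + 1 := by rw [edist_eq_one_iff_adj.mpr huv]
          _ ≤ ((t - 1 - l : ℕ) : ℕ∞) + 1 := by gcongr
          _ = ((t + 1 - 1 - l : ℕ) : ℕ∞) := by norm_cast; omega
    · rintro ⟨l, hl, hd⟩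
      by_cases hl_eq : (l : ℕ) = t
      · refine Or.inl (Or.inr ⟨hl_eq ▸ l.isLt, ?_⟩)
        rw [show t + 1 - 1 - (l : ℕ) = 0 by omega, Nat.cast_zero, nonpos_iff_eq_zero,
          edist_eq_zero_iff] at hd
        simp [← hd, ← hl_eq]
      by_cases hsv : s l = v
      · exact Or.inl (Or.inl ((ih v).mpr ⟨l, by omega, by simp [← hsv, edist_self]⟩))
      obtain ⟨u, huv, hu⟩ := exists_adj_edist_le_of_edist_le_succ (n := t - 1 - l)
        (hd.trans (by norm_cast; omega)) hsv
      exact Or.inr ⟨u, (ih u).mpr ⟨l, by omega, hu⟩, huv⟩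

lemma burnedAt_eq_iUnion_closedBall {k : ℕ} (s : Fin k → V) :
    burnedAt G s k = ⋃ l : Fin k, G.closedBall (s l) (k - 1 - l) := by
  ext v
  simp [mem_burnedAt_iff]

lemma notMem_burnedAt_iff {k : ℕ} (s : Fin k → V) (i : Fin k) :
    s i ∉ burnedAt G s i ↔ ∀ j : Fin k, j < i → ((i - j : ℕ) : ℕ∞) ≤ G.edist (s j) (s i) := by
  simp only [mem_burnedAt_iff, closedBall, Set.mem_ofPred_eq, not_exists, not_and, not_le]
  refine forall_congr' fun j => forall_congr' fun hji => ?_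
  rw [show (i - j : ℕ) = i - 1 - j + 1 by omega, Nat.cast_add_one,
    ENat.add_one_le_iff (ENat.natCast_ne_top _)]

lemma forall_ne_natAbs_sub_le_edist_iff {k : ℕ} (s : Fin k → V) :
    (∀ i j : Fin k, i ≠ j → ((((i : ℕ) : ℤ) - (j : ℕ)).natAbs : ℕ∞) ≤ G.edist (s i) (s j)) ↔
      ∀ i j : Fin k, j < i → ((i - j : ℕ) : ℕ∞) ≤ G.edist (s j) (s i) := by
  refine ⟨fun h i j hji => ?_, fun h i j hij => ?_⟩
  · rw [edist_comm, show (i - j : ℕ) = (((i : ℕ) : ℤ) - (j : ℕ)).natAbs by omega]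
    exact h i j hji.ne'
  · rcases lt_or_gt_of_ne hij with hlt | hlt
    · rw [show (((i : ℕ) : ℤ) - (j : ℕ)).natAbs = (j - i : ℕ) by omega]
      exact h j i hlt
    · rw [edist_comm, show (((i : ℕ) : ℤ) - (j : ℕ)).natAbs = (i - j : ℕ) by omega]
      exact h i j hlt

end SimpleGraph

theorem stmt2_general {V : Type*} (G : SimpleGraph V) {k : ℕ} (s : Fin k → V) :
    ((∀ t : Fin k, s t ∉ burnedAt G s (t : ℕ)) ∧ burnedAt G s k = Set.univ) ↔
      G.IsBurningSeq s := by
  rw [SimpleGraph.IsBurningSeq, SimpleGraph.burnedAt_eq_iUnion_closedBall,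
    SimpleGraph.forall_ne_natAbs_sub_le_edist_iff]
  exact and_congr_left' (forall_congr' (SimpleGraph.notMem_burnedAt_iff s))

/-- Alternative characterization of burning sequences: `s` is a burning sequence iff the
sources are pairwise at distance at least the difference of their indices and the closed
balls of the appropriate radii around the sources cover the graph. -/
theorem stmt2 {V : Type*} [Fintype V] (G : SimpleGraph V) {k : ℕ} (s : Fin k → V) :
    ((∀ t : Fin k, s t ∉ burnedAt G s (t : ℕ)) ∧ burnedAt G s k = Set.univ) ↔
      G.IsBurningSeq s :=
  stmt2_general G s
end

section
/- Let H be a hypergraph and let k be the number of connected components of H that contain at least one non-singleton hyperedge. Then Z(IG(H)) ≤ b_L(H) + |E(H)| − k. -/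
/-!
Start from a minimum lazy burning set `B` and, in every connected component containing a
non-singleton hyperedge, choose one such hyperedge; these chosen hyperedges are pairwise disjoint.
Colour blue the vertices of `B` and all hyperedges except the chosen ones. Whenever a hyperedge `h`
burns its last vertex `v`, another vertex `u ∈ h` is already blue, and every hyperedge through `u`
other than `h` is blue (at most one chosen hyperedge meets `u`), so `u` forces `h` and then `h`
forces `v`. This gives a zero forcing set of size `b_L(H) + |E(H)| - k`.
-/

section Hypergraph

variable {V : Type*} {E : Finset (Finset V)}

theorem hconn_of_mem {h : Finset V} (hE : h ∈ E) {u v : V} (hu : u ∈ h) (hv : v ∈ h) :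
    hconn E u v :=
  Relation.ReflTransGen.single ⟨h, hE, hu, hv⟩

theorem hconn_symm {u v : V} (huv : hconn E u v) : hconn E v u := by
  induction huv with
  | refl => exact .refl
  | tail _ hst ih =>
    obtain ⟨h, hE, hs, ht⟩ := hst
    exact .head ⟨h, hE, ht, hs⟩ ih

theorem setOf_hconn_eq {u v : V} (huv : hconn E u v) :
    {x | hconn E u x} = {x | hconn E v x} :=
  Set.ext fun _ => ⟨(hconn_symm huv).trans, huv.trans⟩

variable (E) in
def nontrivialComponents : Set (Set V) :=
  {c : Set V | (∃ v, c = {u | hconn E v u}) ∧ ∃ h ∈ E, 2 ≤ h.card ∧ ∃ v ∈ h, v ∈ c}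

namespace nontrivialComponents

theorem eq_setOf_hconn {c : Set V} (hc : c ∈ nontrivialComponents E) {u : V} (hu : u ∈ c) :
    c = {x | hconn E u x} := by
  obtain ⟨⟨v, rfl⟩, -⟩ := hc
  exact setOf_hconn_eq hu

theorem eq_of_mem_of_mem {c c' : Set V} (hc : c ∈ nontrivialComponents E)
    (hc' : c' ∈ nontrivialComponents E) {u : V} (hu : u ∈ c) (hu' : u ∈ c') : c = c' := by
  rw [eq_setOf_hconn hc hu, eq_setOf_hconn hc' hu']

theorem mem_of_mem_edge {c : Set V} (hc : c ∈ nontrivialComponents E) {h : Finset V}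
    (hE : h ∈ E) {v : V} (hv : v ∈ h) (hvc : v ∈ c) {u : V} (hu : u ∈ h) : u ∈ c := by
  rw [eq_setOf_hconn hc hvc]
  exact hconn_of_mem hE hv hu

end nontrivialComponents

variable (E) in
theorem exists_pairwiseDisjoint_edges_ncard_eq :
    ∃ S ⊆ (E : Set (Finset V)), S.PairwiseDisjoint id ∧ (∀ h ∈ S, h.Nonempty) ∧
      S.ncard = (nontrivialComponents E).ncard := by
  choose! f hfE _ hf using fun c (hc : c ∈ nontrivialComponents E) => hc.2
  have hf_sub : ∀ c ∈ nontrivialComponents E, ∀ u ∈ f c, u ∈ c := fun c hc u hu =>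
    have ⟨_, hv, hvc⟩ := hf c hc
    nontrivialComponents.mem_of_mem_edge hc (hfE c hc) hv hvc hu
  have hf_inj : Set.InjOn f (nontrivialComponents E) := by
    intro c hc c' hc' hcc'
    obtain ⟨w, hw, -⟩ := hf c hc
    exact nontrivialComponents.eq_of_mem_of_mem hc hc' (hf_sub c hc w hw)
      (hf_sub c' hc' w (hcc' ▸ hw))
  refine ⟨f '' nontrivialComponents E, ?_, ?_, ?_, hf_inj.ncard_image⟩
  · rintro _ ⟨c, hc, rfl⟩
    exact hfE c hc
  · rintro _ ⟨c, hc, rfl⟩ _ ⟨c', hc', rfl⟩ hne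
    refine Finset.disjoint_left.2 fun u hu hu' => hne ?_
    rw [nontrivialComponents.eq_of_mem_of_mem hc hc' (hf_sub c hc u hu) (hf_sub c' hc' u hu')]
  · rintro _ ⟨c, hc, rfl⟩
    obtain ⟨v, hv, -⟩ := hf c hc
    exact ⟨v, hv⟩

variable (E) in
def forcingSeed (B : Set V) (S : Set (Finset V)) : Set (V ⊕ {h // h ∈ E}) :=
  Sum.inl '' B ∪ Sum.inr '' {h | h.1 ∉ S}

section Forcing

variable {B : Set V} {S : Set (Finset V)}

theorem forced_inr_of_forced_inl (hS : S.PairwiseDisjoint id) {h : {h // h ∈ E}} (hh : h.1 ∈ S)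
    {u : V} (hu : u ∈ h.1) (hforced : (IG E).Forced (forcingSeed E B S) (Sum.inl u)) :
    (IG E).Forced (forcingSeed E B S) (Sum.inr h) := by
  refine .force _ _ hforced (Or.inl ⟨u, h, rfl, rfl, hu⟩) ?_
  rintro _ (⟨_, h', ⟨⟩, rfl, hu'⟩ | ⟨_, _, ⟨⟩, -, -⟩) hne
  refine .init _ (Or.inr ⟨h', fun hh' => hne ?_, rfl⟩)
  rw [Subtype.ext (hS.elim_finset hh' hh u hu' hu)]

theorem forced_inl_of_lazyBurned (hS : S.PairwiseDisjoint id) {v : V} (hv : LazyBurned E B v) :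
    (IG E).Forced (forcingSeed E B S) (Sum.inl v) := by
  induction hv with
  | init v hvB => exact .init _ (Or.inl ⟨v, hvB, rfl⟩)
  | spread v h hE hcard hvh _ ih =>
    have hforced_edge : (IG E).Forced (forcingSeed E B S) (Sum.inr ⟨h, hE⟩) := by
      by_cases hh : h ∈ S
      · obtain ⟨u, hu, huv⟩ := Finset.exists_mem_ne hcard v
        exact forced_inr_of_forced_inl hS hh hu (ih u hu huv)
      · exact .init _ (Or.inr ⟨⟨h, hE⟩, hh, rfl⟩)
    refine .force _ _ hforced_edge (Or.inr ⟨v, ⟨h, hE⟩, rfl, rfl, hvh⟩) ?_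
    rintro _ (⟨_, _, ⟨⟩, -, -⟩ | ⟨u, _, ⟨⟩, rfl, hu⟩) hne
    exact ih u hu fun huv => hne (huv ▸ rfl)

theorem isZeroForcingSet_forcingSeed (hB : IsLazyBurningSet E B) (hS : S.PairwiseDisjoint id)
    (hS_ne : ∀ h ∈ S, h.Nonempty) : (IG E).IsZeroForcingSet (forcingSeed E B S) := by
  rintro (v | h)
  · exact forced_inl_of_lazyBurned hS (hB v)
  · by_cases hh : h.1 ∈ S
    · obtain ⟨u, hu⟩ := hS_ne h.1 hh
      exact forced_inr_of_forced_inl hS hh hu (forced_inl_of_lazyBurned hS (hB u))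
    · exact .init _ (Or.inr ⟨h, hh, rfl⟩)

theorem ncard_forcingSeed [Finite V] (hSE : S ⊆ E) :
    (forcingSeed E B S).ncard = B.ncard + (E.card - S.ncard) := by
  have hseed_edges : Subtype.val '' {h : {h // h ∈ E} | h.1 ∉ S} = (E : Set (Finset V)) \ S := by
    ext h
    simp [and_comm]
  rw [forcingSeed, Set.ncard_union_eq (Set.disjoint_left.2 (by simp)),
    Set.ncard_image_of_injective _ Sum.inl_injective,
    Set.ncard_image_of_injective _ Sum.inr_injective,
    ← Set.ncard_image_of_injective _ Subtype.val_injective, hseed_edges,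
    Set.ncard_sdiff' hSE, Set.ncard_coe_finset]

end Forcing

variable (E) in
theorem exists_isLazyBurningSet_ncard_eq :
    ∃ B : Set V, B.ncard = lazyBurningNumber E ∧ IsLazyBurningSet E B :=
  Nat.sInf_mem (s := {n | ∃ B : Set V, B.ncard = n ∧ IsLazyBurningSet E B})
    ⟨_, Set.univ, rfl, fun v => .init v trivial⟩

end Hypergraph

theorem stmt6_general {V : Type*} [Fintype V] (E : Finset (Finset V)) :
    (IG E).zeroForcingNumber ≤ lazyBurningNumber E + E.card -
      Set.ncard {c : Set V | (∃ v, c = {u | hconn E v u}) ∧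
        ∃ h ∈ E, 2 ≤ h.card ∧ ∃ v ∈ h, v ∈ c} := by
  obtain ⟨B, hB_card, hB⟩ := exists_isLazyBurningSet_ncard_eq E
  obtain ⟨S, hSE, hS, hS_ne, hS_card⟩ := exists_pairwiseDisjoint_edges_ncard_eq E
  have hZ : (IG E).zeroForcingNumber ≤ (forcingSeed E B S).ncard :=
    Nat.sInf_le ⟨_, rfl, isZeroForcingSet_forcingSeed hB hS hS_ne⟩
  have hS_le : S.ncard ≤ E.card := by
    simpa using Set.ncard_le_ncard hSE
  rw [ncard_forcingSeed hSE, hB_card, hS_card] at hZ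
  change _ ≤ _ + _ - (nontrivialComponents E).ncard
  omega

/-- `Z(IG(H)) ≤ b_L(H) + |E(H)| - k`, where `k` is the number of connected components of `H`
containing a non-singleton hyperedge. -/
theorem stmt6 {V : Type*} [Fintype V] [DecidableEq V] (E : Finset (Finset V)) :
    (IG E).zeroForcingNumber ≤ lazyBurningNumber E + E.card -
      Set.ncard {c : Set V | (∃ v, c = {u | hconn E v u}) ∧
        ∃ h ∈ E, 2 ≤ h.card ∧ ∃ v ∈ h, v ∈ c} :=
  stmt6_general E
end

section
/- There exist two non-isomorphic graphs G and H on 6 vertices, cospectral with respect to the adjacency matrix (both having characteristic polynomial λ^6 − 7λ^4 − 4λ^3 + 7λ^2 + 4λ − 1), such that b(G) = 2 and b(H) = 3. -/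
open scoped Classical in
/-- The graph `G` of Example: edges `12, 13, 23, 34, 35, 36, 46`. -/
noncomputable def exG : SimpleGraph (Fin 6) :=
  SimpleGraph.fromEdgeSet {s(0, 1), s(0, 2), s(1, 2), s(2, 3), s(2, 4), s(2, 5), s(3, 5)}

open scoped Classical in
/-- The graph `H` of Example: edges `12, 23, 24, 34, 35, 45, 56`. -/
noncomputable def exH : SimpleGraph (Fin 6) :=
  SimpleGraph.fromEdgeSet {s(0, 1), s(1, 2), s(1, 3), s(2, 3), s(2, 4), s(3, 4), s(4, 5)}

/-!
`G` has a universal vertex (`v₃`) and `H` does not, so no isomorphism exists. A universal vertex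
`a` of a graph with at least two vertices gives the burning sequence `(a, b)` for any `b ≠ a`, so
`b(G) = 2`. A burning sequence `(x₁, x₂)` forces `V = N[x₁] ∪ {x₂}`, which fails in `H`, while
`(v₃, v₁, v₆)` burns `H` since every vertex lies within distance `2` of `v₃`; so `b(H) = 3`.
The two characteristic polynomials are computed by cofactor expansion. Vertex `vᵢ` is
`i - 1 : Fin 6`.
-/

namespace SimpleGraph

variable {V : Type*} {G : SimpleGraph V}

theorem IsUniversal.iso {W : Type*} {G' : SimpleGraph W} {v : V} (f : G ≃g G')
    (h : G.IsUniversal v) : G'.IsUniversal (f v) := by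
  intro w hw
  obtain ⟨u, rfl⟩ := f.surjective w
  exact f.map_adj_iff.mpr (h fun huv => hw (congrArg f huv))

theorem not_nonempty_iso_of_isUniversal {W : Type*} {G' : SimpleGraph W} {a : V}
    (ha : G.IsUniversal a) (hG' : ∀ b, ¬G'.IsUniversal b) : ¬Nonempty (G ≃g G') :=
  fun ⟨f⟩ => hG' (f a) (ha.iso f)

theorem closedBall_zero (v : V) : G.closedBall v 0 = {v} := by
  ext w
  simp only [closedBall, Set.mem_ofPred_eq, Set.mem_singleton_iff, Nat.cast_zero,
    nonpos_iff_eq_zero, edist_eq_zero_iff]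
  exact eq_comm

theorem mem_closedBall_one {v w : V} : w ∈ G.closedBall v 1 ↔ G.Adj v w ∨ v = w :=
  edist_le_one_iff_adj_or_eq

theorem edist_le_two_of_adj_or_eq {u v w : V} (hu : G.Adj u w ∨ u = w) (hv : G.Adj w v ∨ w = v) :
    G.edist u v ≤ 2 :=
  calc G.edist u v ≤ G.edist u w + G.edist w v := G.edist_triangle
    _ ≤ 1 + 1 := add_le_add (edist_le_one_iff_adj_or_eq.mpr hu) (edist_le_one_iff_adj_or_eq.mpr hv)
    _ = 2 := one_add_one_eq_two

theorem one_le_edist_of_ne {u v : V} (h : u ≠ v) : 1 ≤ G.edist u v :=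
  Order.one_le_iff_pos.mpr (edist_pos_of_ne h)

theorem two_le_edist_of_not_adj {u v : V} (hne : u ≠ v) (hnadj : ¬G.Adj u v) :
    2 ≤ G.edist u v := by
  by_contra! h
  have : G.edist u v ≤ 1 := Order.le_of_lt_add_one h
  exact (edist_le_one_iff_adj_or_eq.mp this).elim hnadj hne

namespace IsBurningSeq

variable {k : ℕ} {s : Fin k → V}

theorem exists_mem_closedBall (hs : G.IsBurningSeq s) (v : V) :
    ∃ l : Fin k, v ∈ G.closedBall (s l) (k - 1 - l) :=
  Set.mem_iUnion.mp (hs.2 ▸ Set.mem_univ v)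

theorem two_le_length [Nontrivial V] (hs : G.IsBurningSeq s) : 2 ≤ k := by
  by_contra! hk
  obtain ⟨u, v, huv⟩ := exists_pair_ne V
  obtain ⟨l, hu⟩ := hs.exists_mem_closedBall u
  obtain ⟨l', hv⟩ := hs.exists_mem_closedBall v
  obtain rfl : k = 1 := by have := l.pos; omega
  fin_cases l; fin_cases l'
  have hu : u ∈ G.closedBall (s 0) 0 := hu
  have hv : v ∈ G.closedBall (s 0) 0 := hv
  rw [closedBall_zero] at hu hv
  exact huv (hu.trans hv.symm)

theorem adj_or_eq_of_length_two {s : Fin 2 → V} (hs : G.IsBurningSeq s) (v : V) :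
    G.Adj (s 0) v ∨ s 0 = v ∨ s 1 = v := by
  obtain ⟨l, hl⟩ := hs.exists_mem_closedBall v
  fin_cases l
  · exact or_assoc.mp (Or.inl (mem_closedBall_one.mp hl))
  · have hl : v ∈ G.closedBall (s 1) 0 := hl
    rw [closedBall_zero] at hl
    exact Or.inr (Or.inr hl.symm)

theorem three_le_length [Nontrivial V] (hG : ∀ a b, ∃ v, ¬G.Adj a v ∧ a ≠ v ∧ b ≠ v)
    (hs : G.IsBurningSeq s) : 3 ≤ k := by
  by_contra! hk
  obtain rfl : k = 2 := by have := hs.two_le_length; omega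
  obtain ⟨v, hv⟩ := hG (s 0) (s 1)
  have := hs.adj_or_eq_of_length_two v
  tauto

end IsBurningSeq

theorem isBurningSeq_pair {a b : V} (ha : G.IsUniversal a) (hab : a ≠ b) :
    G.IsBurningSeq ![a, b] := by
  refine ⟨fun i j hij => ?_, Set.eq_univ_of_forall fun v => Set.mem_iUnion.mpr ⟨0, ?_⟩⟩
  · have hab' : 1 ≤ G.edist a b := one_le_edist_of_ne hab
    fin_cases i <;> fin_cases j <;> simp_all [edist_comm]
  · show v ∈ G.closedBall a 1
    exact mem_closedBall_one.mpr (or_iff_not_imp_right.mpr (@ha v))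

theorem isBurningSeq_triple {a b c : V}
    (hcov : ∀ v, ∃ w, (G.Adj a w ∨ a = w) ∧ (G.Adj w v ∨ w = v))
    (hab : a ≠ b) (hbc : b ≠ c) (hac : a ≠ c) (hnadj : ¬G.Adj a c) :
    G.IsBurningSeq ![a, b, c] := by
  refine ⟨fun i j hij => ?_, Set.eq_univ_of_forall fun v => Set.mem_iUnion.mpr ⟨0, ?_⟩⟩
  · have hab' : 1 ≤ G.edist a b := one_le_edist_of_ne hab
    have hbc' : 1 ≤ G.edist b c := one_le_edist_of_ne hbc
    have hac' : 2 ≤ G.edist a c := two_le_edist_of_not_adj hac hnadj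
    fin_cases i <;> fin_cases j <;> simp_all [edist_comm]
  · obtain ⟨w, hw⟩ := hcov v
    exact edist_le_two_of_adj_or_eq hw.1 hw.2

theorem burningNumber_eq_of_isBurningSeq {k : ℕ} {s : Fin k → V} (hs : G.IsBurningSeq s)
    (hmin : ∀ m (t : Fin m → V), G.IsBurningSeq t → k ≤ m) : G.burningNumber = k :=
  le_antisymm (Nat.sInf_le ⟨s, hs⟩) (le_csInf ⟨k, s, hs⟩ fun m ⟨t, ht⟩ => hmin m t ht)

theorem burningNumber_eq_two_of_isUniversal [Nontrivial V] {a : V} (ha : G.IsUniversal a) :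
    G.burningNumber = 2 := by
  obtain ⟨b, hab⟩ := exists_ne a
  exact burningNumber_eq_of_isBurningSeq (isBurningSeq_pair ha hab.symm)
    fun _ _ ht => ht.two_le_length

end SimpleGraph

section

open SimpleGraph Polynomial

local instance decidableRelAdjExG : DecidableRel exG.Adj := by unfold exG; infer_instance

local instance decidableRelAdjExH : DecidableRel exH.Adj := by unfold exH; infer_instance

theorem isUniversal_exG_two : exG.IsUniversal 2 := by
  unfold IsUniversal; decide

theorem not_isUniversal_exH (v : Fin 6) : ¬exH.IsUniversal v := by
  unfold IsUniversal; revert v; decide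

theorem exH_exists_ne_not_adj (a b : Fin 6) : ∃ v, ¬exH.Adj a v ∧ a ≠ v ∧ b ≠ v := by
  revert a b; decide

theorem exH_two_step_cover (v : Fin 6) : ∃ w, (exH.Adj 2 w ∨ 2 = w) ∧ (exH.Adj w v ∨ w = v) := by
  revert v; decide

theorem adjMatrix_exG [inst : DecidableRel exG.Adj] :
    exG.adjMatrix ℤ =
      !![0,1,1,0,0,0; 1,0,1,0,0,0; 1,1,0,1,1,1; 0,0,1,0,0,1; 0,0,1,0,0,0; 0,0,1,1,0,0] := by
  obtain rfl := Subsingleton.elim inst decidableRelAdjExG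
  decide

theorem adjMatrix_exH [inst : DecidableRel exH.Adj] :
    exH.adjMatrix ℤ =
      !![0,1,0,0,0,0; 1,0,1,1,0,0; 0,1,0,1,1,0; 0,1,1,0,1,0; 0,0,1,1,0,1; 0,0,0,0,1,0] := by
  obtain rfl := Subsingleton.elim inst decidableRelAdjExH
  decide

set_option maxHeartbeats 800000 in
theorem charpoly_adjMatrix_exG [DecidableRel exG.Adj] :
    (exG.adjMatrix ℤ).charpoly = X ^ 6 - 7 * X ^ 4 - 4 * X ^ 3 + 7 * X ^ 2 + 4 * X - 1 := by
  rw [adjMatrix_exG]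
  simp [Matrix.charpoly, Matrix.charmatrix_apply, Matrix.det_succ_row_zero, Fin.sum_univ_succ,
    Fin.succAbove]
  ring

set_option maxHeartbeats 800000 in
theorem charpoly_adjMatrix_exH [DecidableRel exH.Adj] :
    (exH.adjMatrix ℤ).charpoly = X ^ 6 - 7 * X ^ 4 - 4 * X ^ 3 + 7 * X ^ 2 + 4 * X - 1 := by
  rw [adjMatrix_exH]
  simp [Matrix.charpoly, Matrix.charmatrix_apply, Matrix.det_succ_row_zero, Fin.sum_univ_succ,
    Fin.succAbove]
  ring

theorem not_nonempty_iso_exG_exH : ¬Nonempty (exG ≃g exH) :=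
  not_nonempty_iso_of_isUniversal isUniversal_exG_two not_isUniversal_exH

theorem burningNumber_exG : exG.burningNumber = 2 :=
  burningNumber_eq_two_of_isUniversal isUniversal_exG_two

theorem burningNumber_exH : exH.burningNumber = 3 :=
  burningNumber_eq_of_isBurningSeq
    (isBurningSeq_triple (b := 0) (c := 5) exH_two_step_cover (by decide) (by decide) (by decide)
      (by decide))
    fun _ _ ht => ht.three_le_length exH_exists_ne_not_adj

end

open Polynomial in
open scoped Classical in
/-- There exist non-isomorphic cospectral graphs on 6 vertices, with characteristic polynomial
`λ^6 - 7λ^4 - 4λ^3 + 7λ^2 + 4λ - 1`, with burning numbers `2` and `3`. -/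
theorem stmt16 :
    ¬ Nonempty (exG ≃g exH) ∧
    (exG.adjMatrix ℤ).charpoly =
      X ^ 6 - 7 * X ^ 4 - 4 * X ^ 3 + 7 * X ^ 2 + 4 * X - 1 ∧
    (exH.adjMatrix ℤ).charpoly =
      X ^ 6 - 7 * X ^ 4 - 4 * X ^ 3 + 7 * X ^ 2 + 4 * X - 1 ∧
    exG.burningNumber = 2 ∧ exH.burningNumber = 3 :=
  ⟨not_nonempty_iso_exG_exH, charpoly_adjMatrix_exG, charpoly_adjMatrix_exH, burningNumber_exG,
    burningNumber_exH⟩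
end
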